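/- arXiv:2111.00098 — 4 statements merged into one kernel-verified Lean document; each statement's English description precedes it below -/
import Mathlib

section
/- Suppose x[τ+1] = Ãx[τ] + B̃u[τ] and x[τ+1] ∈ nul(Ψ) for a given matrix Ψ, and additionally Ã_eq x[τ] = 0. Then x[τ] lies in the null space of the stacked matrix [ΓB H_x + ΓA ; Ã_eq], where ΓA = ΨÃ, ΓB = ΨB̃, and H_x = −ΓB⁺ΓA. -/
open Matrix

/-- `Ap` satisfies the four Penrose conditions for `A`. -/
def IsMoorePenrose {m n : ℕ} (A : Matrix (Fin m) (Fin n) ℝ)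
    (Ap : Matrix (Fin n) (Fin m) ℝ) : Prop :=
  A * Ap * A = A ∧ Ap * A * Ap = Ap ∧ (A * Ap)ᵀ = A * Ap ∧ (Ap * A)ᵀ = Ap * A

/-- If `x' = Ãx + B̃u` lies in `nul(Ψ)` and `Ã_eq x = 0`, then `x` lies in the null
space of the stacked matrix `[ΓB H_x + ΓA ; Ã_eq]` with `ΓA = ΨÃ`, `ΓB = ΨB̃`,
`H_x = −ΓB⁺ΓA`. -/
theorem state_in_nullspace_of_stacked {p n m q : ℕ}
    (Atil : Matrix (Fin n) (Fin n) ℝ) (Btil : Matrix (Fin n) (Fin m) ℝ)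
    (Ψ : Matrix (Fin p) (Fin n) ℝ) (Aeq : Matrix (Fin q) (Fin n) ℝ)
    (x x' : Fin n → ℝ) (u : Fin m → ℝ)
    (hdyn : x' = Atil.mulVec x + Btil.mulVec u)
    (hnull : Ψ.mulVec x' = 0) (heq : Aeq.mulVec x = 0)
    (ΓA : Matrix (Fin p) (Fin n) ℝ) (ΓB : Matrix (Fin p) (Fin m) ℝ)
    (hΓA : ΓA = Ψ * Atil) (hΓB : ΓB = Ψ * Btil)
    (ΓBp : Matrix (Fin m) (Fin p) ℝ) (hpinv : IsMoorePenrose ΓB ΓBp)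
    (Hx : Matrix (Fin m) (Fin n) ℝ) (hHx : Hx = -(ΓBp * ΓA)) :
    (Matrix.fromRows (ΓB * Hx + ΓA) Aeq).mulVec x = 0 := by
  have key : ΓA.mulVec x = -(ΓB.mulVec u) := by
    subst hdyn
    rw [Matrix.mulVec_add] at hnull
    simp only [hΓA, hΓB, ← Matrix.mulVec_mulVec] at hnull ⊢
    exact eq_neg_of_add_eq_zero_left hnull
  have top : (ΓB * Hx + ΓA).mulVec x = 0 := by
    rw [Matrix.add_mulVec, hHx, Matrix.mul_neg, Matrix.neg_mulVec,
      ← Matrix.mul_assoc, ← Matrix.mulVec_mulVec, key, Matrix.mulVec_neg,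
      Matrix.mulVec_mulVec, hpinv.1]
    simp
  rw [Matrix.fromRows_mulVec, top, heq]
  ext (i | i) <;> rfl
end

section
/- Given a solution of the two SLS affine constraints [zI−A, −B][Φxx Φxy; Φux Φuy] = [I, 0] and [Φxx Φxy; Φux Φuy][zI−A; −C] = [I; 0] with FIR transfer matrices Φxx = Σ_{τ=1}^T z^{-τ}Φxx[τ] (and similarly for the others, Φuy = Σ_{τ=0}^T z^{-τ}Φuy[τ]), the spectral components satisfy the recursions Φxy[τ+1] = AΦxy[τ] + BΦuy[τ] for τ = 0,…,T−1 (with Φxy[0] = 0), Φxx[τ+1] = Φxx[τ]A + Φxy[τ]C and Φux[τ+1] = Φux[τ]A + Φuy[τ]C for τ = 1,…,T−1, the interior constraint AΦxx[τ] + BΦux[τ] = Φxx[τ]A + Φxy[τ]C for τ = 1,…,T, the initial conditions Φxx[1] = I, Φxy[1] = BΦuy[0], Φux[1] = Φuy[0]C, and the terminal conditions Φxx[T]A + Φxy[T]C = 0, AΦxy[T] + BΦuy[T] = 0, Φux[T]A + Φuy[T]C = 0. -/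
open Matrix Finset

section SlsHelpers

variable {α : Type*} [AddCommGroup α] [Module ℝ α]

private lemma zpow_smul_neg (z : ℝ) (hz : z ≠ 0) {T τ : ℕ} (h : τ ≤ T) (x : α) :
    (z ^ T) • (z ^ (-(τ:ℤ))) • x = (z ^ (T - τ)) • x := by
  rw [smul_smul]
  congr 1
  rw [← zpow_natCast z T, ← zpow_add₀ hz, ← zpow_natCast z (T - τ)]
  congr 1
  omega

private lemma sls_shift1 (T : ℕ) (M : ℕ → α) (hM : M 0 = 0) (z : ℝ) (hz : z ≠ 0) :
    (z ^ T) • ∑ τ ∈ Icc 1 T, (z ^ (-(τ:ℤ))) • M τ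
      = ∑ k ∈ range (T+1), (z ^ k) • M (T - k) := by
  rw [smul_sum]
  rw [sum_congr rfl (fun τ hτ => zpow_smul_neg z hz (mem_Icc.1 hτ).2 (M τ))]
  have step : ∑ τ ∈ Icc 1 T, (z ^ (T - τ)) • M τ
      = ∑ τ ∈ range (T+1), (z ^ (T - τ)) • M τ := by
    refine sum_subset (fun x hx => ?_) (fun x hx hx' => ?_)
    · simp only [mem_Icc] at hx; simp only [mem_range]; omega
    · simp only [mem_Icc, mem_range] at hx hx'
      have : x = 0 := by omega
      simp [this, hM]
  rw [step, ← Finset.sum_range_reflect (fun k => (z ^ k) • M (T - k)) (T+1)]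
  refine sum_congr rfl fun τ hτ => ?_
  have hτ' : τ ≤ T := by simpa [Nat.lt_succ_iff] using mem_range.1 hτ
  have e1 : T + 1 - 1 - τ = T - τ := by omega
  have e2 : T - (T - τ) = τ := by omega
  simp only [e1, e2]

private lemma sls_shift3 (T : ℕ) (M : ℕ → α) (z : ℝ) (hz : z ≠ 0) :
    (z ^ T) • ∑ τ ∈ range (T+1), (z ^ (-(τ:ℤ))) • M τ
      = ∑ k ∈ range (T+1), (z ^ k) • M (T - k) := by
  rw [smul_sum]
  rw [sum_congr rfl (fun τ hτ => zpow_smul_neg z hz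
    (by simpa [Nat.lt_succ_iff] using mem_range.1 hτ) (M τ))]
  rw [← Finset.sum_range_reflect (fun k => (z ^ k) • M (T - k)) (T+1)]
  refine sum_congr rfl fun τ hτ => ?_
  have hτ' : τ ≤ T := by simpa [Nat.lt_succ_iff] using mem_range.1 hτ
  have e1 : T + 1 - 1 - τ = T - τ := by omega
  have e2 : T - (T - τ) = τ := by omega
  simp only [e1, e2]

private lemma sls_shift2 (T : ℕ) (M : ℕ → α) (hM : M 0 = 0) (z : ℝ) (hz : z ≠ 0) :
    (z ^ (T+1)) • ∑ τ ∈ Icc 1 T, (z ^ (-(τ:ℤ))) • M τ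
      = ∑ k ∈ range (T+1), (z ^ k) • (if 1 ≤ k then M (T + 1 - k) else 0) := by
  have h0 : (z ^ (T+1)) • ∑ τ ∈ Icc 1 T, (z ^ (-(τ:ℤ))) • M τ
      = z • ((z ^ T) • ∑ τ ∈ Icc 1 T, (z ^ (-(τ:ℤ))) • M τ) := by
    rw [smul_smul, ← pow_succ']
  rw [h0, sls_shift1 T M hM z hz, smul_sum]
  rw [Finset.sum_range_succ' (fun k => (z ^ k) • (if 1 ≤ k then M (T + 1 - k) else 0))]
  rw [Finset.sum_range_succ (fun k => z • ((z ^ k) • M (T - k)))]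
  have last : z • ((z ^ T) • M (T - T)) = 0 := by
    simp [Nat.sub_self, hM]
  rw [last, add_zero]
  have first : (z ^ 0) • (if 1 ≤ 0 then M (T + 1 - 0) else 0) = (0 : α) := by simp
  rw [first, add_zero]
  refine sum_congr rfl fun i hi => ?_
  have e : T + 1 - (i + 1) = T - i := by omega
  simp [e, smul_smul, pow_succ']

end SlsHelpers

private lemma sls_coeffs_vanish {p q n : ℕ} (M : ℕ → Matrix (Fin p) (Fin q) ℝ)
    (h : ∀ z : ℝ, z ≠ 0 → ∑ k ∈ range n, (z ^ k) • M k = 0) :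
    ∀ k, k < n → M k = 0 := by
  intro k hk
  ext i j
  set P : Polynomial ℝ := ∑ m ∈ range n, Polynomial.C (M m i j) * Polynomial.X ^ m with hP
  have hroot : ∀ z : ℝ, z ≠ 0 → P.eval z = 0 := by
    intro z hz
    have := congrArg (fun m => m i j) (h z hz)
    simp only [Matrix.sum_apply, Matrix.smul_apply, Matrix.zero_apply, smul_eq_mul] at this
    simp only [hP, Polynomial.eval_finset_sum, Polynomial.eval_mul, Polynomial.eval_C,
      Polynomial.eval_pow, Polynomial.eval_X]
    rw [← this]
    exact sum_congr rfl fun m _ => mul_comm _ _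
  have hPzero : P = 0 := by
    apply Polynomial.eq_zero_of_infinite_isRoot
    apply Set.Infinite.mono (s := {(0:ℝ)}ᶜ)
    · intro z hz
      exact hroot z hz
    · exact Set.Finite.infinite_compl (Set.finite_singleton 0)
  have := congrArg (fun Q => Polynomial.coeff Q k) hPzero
  simp only [hP, Polynomial.finset_sum_coeff, Polynomial.coeff_C_mul, Polynomial.coeff_X_pow,
    Polynomial.coeff_zero, mul_ite, mul_one, mul_zero] at this
  rw [Finset.sum_ite_eq (range n) k (fun m => M m i j)] at this
  simpa [mem_range.2 hk] using this

/-- Equating coefficients in the two SLS affine transfer-matrix constraints: if the FIR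
transfer matrices `Φxx, Φxy, Φux` (strictly proper, horizon `T`) and `Φuy` (proper,
horizon `T`) satisfy `[zI−A, −B]Φ = [I, 0]` and `Φ[zI−A; −C] = [I; 0]` for all `z ≠ 0`,
then their spectral components satisfy the stated recursions, interior constraint,
initial conditions, and terminal conditions. -/
theorem sls_constraints_to_time_domain {Nx Nu Ny : ℕ} (T : ℕ) (hT : 1 ≤ T)
    (A : Matrix (Fin Nx) (Fin Nx) ℝ) (B : Matrix (Fin Nx) (Fin Nu) ℝ)
    (C : Matrix (Fin Ny) (Fin Nx) ℝ)
    (Φxx : ℕ → Matrix (Fin Nx) (Fin Nx) ℝ) (Φxy : ℕ → Matrix (Fin Nx) (Fin Ny) ℝ)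
    (Φux : ℕ → Matrix (Fin Nu) (Fin Nx) ℝ) (Φuy : ℕ → Matrix (Fin Nu) (Fin Ny) ℝ)
    (hxx0 : Φxx 0 = 0) (hxy0 : Φxy 0 = 0) (hux0 : Φux 0 = 0)
    (h1 : ∀ z : ℝ, z ≠ 0 →
      (z • (1 : Matrix (Fin Nx) (Fin Nx) ℝ) - A) *
          (∑ τ ∈ Icc 1 T, (z ^ (-(τ : ℤ))) • Φxx τ) -
        B * (∑ τ ∈ Icc 1 T, (z ^ (-(τ : ℤ))) • Φux τ) = 1)
    (h2 : ∀ z : ℝ, z ≠ 0 →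
      (z • (1 : Matrix (Fin Nx) (Fin Nx) ℝ) - A) *
          (∑ τ ∈ Icc 1 T, (z ^ (-(τ : ℤ))) • Φxy τ) -
        B * (∑ τ ∈ range (T + 1), (z ^ (-(τ : ℤ))) • Φuy τ) = 0)
    (h3 : ∀ z : ℝ, z ≠ 0 →
      (∑ τ ∈ Icc 1 T, (z ^ (-(τ : ℤ))) • Φxx τ) *
          (z • (1 : Matrix (Fin Nx) (Fin Nx) ℝ) - A) -
        (∑ τ ∈ Icc 1 T, (z ^ (-(τ : ℤ))) • Φxy τ) * C = 1)
    (h4 : ∀ z : ℝ, z ≠ 0 →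
      (∑ τ ∈ Icc 1 T, (z ^ (-(τ : ℤ))) • Φux τ) *
          (z • (1 : Matrix (Fin Nx) (Fin Nx) ℝ) - A) -
        (∑ τ ∈ range (T + 1), (z ^ (-(τ : ℤ))) • Φuy τ) * C = 0) :
    (∀ τ, τ < T → Φxy (τ + 1) = A * Φxy τ + B * Φuy τ) ∧
    (∀ τ, 1 ≤ τ → τ < T → Φxx (τ + 1) = Φxx τ * A + Φxy τ * C) ∧
    (∀ τ, 1 ≤ τ → τ < T → Φux (τ + 1) = Φux τ * A + Φuy τ * C) ∧
    (∀ τ, 1 ≤ τ → τ ≤ T → A * Φxx τ + B * Φux τ = Φxx τ * A + Φxy τ * C) ∧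
    (Φxx 1 = 1 ∧ Φxy 1 = B * Φuy 0 ∧ Φux 1 = Φuy 0 * C) ∧
    (Φxx T * A + Φxy T * C = 0 ∧ A * Φxy T + B * Φuy T = 0 ∧
      Φux T * A + Φuy T * C = 0) := by
  -- Family 1 : coefficients of z^T • h1
  have key1 : ∀ k, k < T + 1 →
      (if 1 ≤ k then Φxx (T + 1 - k) else 0) - (A * Φxx (T - k) + B * Φux (T - k))
        - (if k = T then (1 : Matrix (Fin Nx) (Fin Nx) ℝ) else 0) = 0 := by
    apply sls_coeffs_vanish
    intro z hz
    have e1 := sls_shift2 T Φxx hxx0 z hz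
    have e2 := sls_shift1 T Φxx hxx0 z hz
    have e3 := sls_shift1 T Φux hux0 z hz
    have expand : ∀ k : ℕ, (z ^ k) • ((if 1 ≤ k then Φxx (T + 1 - k) else 0)
        - (A * Φxx (T - k) + B * Φux (T - k))
        - (if k = T then (1 : Matrix (Fin Nx) (Fin Nx) ℝ) else 0))
      = (z ^ k) • (if 1 ≤ k then Φxx (T + 1 - k) else 0)
        - (A * ((z ^ k) • Φxx (T - k)) + B * ((z ^ k) • Φux (T - k)))
        - (z ^ k) • (if k = T then (1 : Matrix (Fin Nx) (Fin Nx) ℝ) else 0) := by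
      intro k
      rw [smul_sub, smul_sub, smul_add, Matrix.mul_smul, Matrix.mul_smul]
    rw [sum_congr rfl fun k _ => expand k]
    rw [sum_sub_distrib, sum_sub_distrib, sum_add_distrib, ← Matrix.mul_sum, ← Matrix.mul_sum]
    rw [← e1, ← e2, ← e3]
    have e4 : ∑ k ∈ range (T+1),
        (z ^ k) • (if k = T then (1 : Matrix (Fin Nx) (Fin Nx) ℝ) else 0)
        = (z ^ T) • (1 : Matrix (Fin Nx) (Fin Nx) ℝ) := by
      rw [Finset.sum_eq_single T]
      · simp
      · intro b _ hb; simp [hb]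
      · intro hT'; exact absurd (self_mem_range_succ T) hT'
    rw [e4]
    have expand2 : (z ^ T) • ((z • (1 : Matrix (Fin Nx) (Fin Nx) ℝ) - A) *
          (∑ τ ∈ Icc 1 T, (z ^ (-(τ : ℤ))) • Φxx τ) -
        B * (∑ τ ∈ Icc 1 T, (z ^ (-(τ : ℤ))) • Φux τ))
        = (z ^ (T+1)) • (∑ τ ∈ Icc 1 T, (z ^ (-(τ : ℤ))) • Φxx τ)
          - (A * ((z ^ T) • (∑ τ ∈ Icc 1 T, (z ^ (-(τ : ℤ))) • Φxx τ))
            + B * ((z ^ T) • (∑ τ ∈ Icc 1 T, (z ^ (-(τ : ℤ))) • Φux τ))) := by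
      rw [smul_sub, Matrix.sub_mul, smul_sub, Matrix.smul_mul, Matrix.one_mul, smul_smul, ← pow_succ,
        Matrix.mul_smul, Matrix.mul_smul]
      abel
    rw [← expand2, h1 z hz, sub_self]
  -- Family 2 : coefficients of z^T • h2
  have key2 : ∀ k, k < T + 1 →
      (if 1 ≤ k then Φxy (T + 1 - k) else 0) - (A * Φxy (T - k) + B * Φuy (T - k)) = 0 := by
    apply sls_coeffs_vanish
    intro z hz
    have e1 := sls_shift2 T Φxy hxy0 z hz
    have e2 := sls_shift1 T Φxy hxy0 z hz
    have e3 := sls_shift3 T Φuy z hz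
    have expand : ∀ k : ℕ, (z ^ k) • ((if 1 ≤ k then Φxy (T + 1 - k) else 0)
        - (A * Φxy (T - k) + B * Φuy (T - k)))
      = (z ^ k) • (if 1 ≤ k then Φxy (T + 1 - k) else 0)
        - (A * ((z ^ k) • Φxy (T - k)) + B * ((z ^ k) • Φuy (T - k))) := by
      intro k
      rw [smul_sub, smul_add, Matrix.mul_smul, Matrix.mul_smul]
    rw [sum_congr rfl fun k _ => expand k]
    rw [sum_sub_distrib, sum_add_distrib, ← Matrix.mul_sum, ← Matrix.mul_sum]
    rw [← e1, ← e2, ← e3]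
    have expand2 : (z ^ T) • ((z • (1 : Matrix (Fin Nx) (Fin Nx) ℝ) - A) *
          (∑ τ ∈ Icc 1 T, (z ^ (-(τ : ℤ))) • Φxy τ) -
        B * (∑ τ ∈ range (T + 1), (z ^ (-(τ : ℤ))) • Φuy τ))
        = (z ^ (T+1)) • (∑ τ ∈ Icc 1 T, (z ^ (-(τ : ℤ))) • Φxy τ)
          - (A * ((z ^ T) • (∑ τ ∈ Icc 1 T, (z ^ (-(τ : ℤ))) • Φxy τ))
            + B * ((z ^ T) • (∑ τ ∈ range (T + 1), (z ^ (-(τ : ℤ))) • Φuy τ))) := by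
      rw [smul_sub, Matrix.sub_mul, smul_sub, Matrix.smul_mul, Matrix.one_mul, smul_smul, ← pow_succ,
        Matrix.mul_smul, Matrix.mul_smul]
      abel
    rw [← expand2, h2 z hz, smul_zero]
  -- Family 3 : coefficients of z^T • h3
  have key3 : ∀ k, k < T + 1 →
      (if 1 ≤ k then Φxx (T + 1 - k) else 0) - (Φxx (T - k) * A + Φxy (T - k) * C)
        - (if k = T then (1 : Matrix (Fin Nx) (Fin Nx) ℝ) else 0) = 0 := by
    apply sls_coeffs_vanish
    intro z hz
    have e1 := sls_shift2 T Φxx hxx0 z hz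
    have e2 := sls_shift1 T Φxx hxx0 z hz
    have e3 := sls_shift1 T Φxy hxy0 z hz
    have expand : ∀ k : ℕ, (z ^ k) • ((if 1 ≤ k then Φxx (T + 1 - k) else 0)
        - (Φxx (T - k) * A + Φxy (T - k) * C)
        - (if k = T then (1 : Matrix (Fin Nx) (Fin Nx) ℝ) else 0))
      = (z ^ k) • (if 1 ≤ k then Φxx (T + 1 - k) else 0)
        - (((z ^ k) • Φxx (T - k)) * A + ((z ^ k) • Φxy (T - k)) * C)
        - (z ^ k) • (if k = T then (1 : Matrix (Fin Nx) (Fin Nx) ℝ) else 0) := by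
      intro k
      rw [smul_sub, smul_sub, smul_add, Matrix.smul_mul, Matrix.smul_mul]
    rw [sum_congr rfl fun k _ => expand k]
    rw [sum_sub_distrib, sum_sub_distrib, sum_add_distrib, ← Matrix.sum_mul, ← Matrix.sum_mul]
    rw [← e1, ← e2, ← e3]
    have e4 : ∑ k ∈ range (T+1),
        (z ^ k) • (if k = T then (1 : Matrix (Fin Nx) (Fin Nx) ℝ) else 0)
        = (z ^ T) • (1 : Matrix (Fin Nx) (Fin Nx) ℝ) := by
      rw [Finset.sum_eq_single T]
      · simp
      · intro b _ hb; simp [hb]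
      · intro hT'; exact absurd (self_mem_range_succ T) hT'
    rw [e4]
    have expand2 : (z ^ T) • ((∑ τ ∈ Icc 1 T, (z ^ (-(τ : ℤ))) • Φxx τ) *
          (z • (1 : Matrix (Fin Nx) (Fin Nx) ℝ) - A) -
        (∑ τ ∈ Icc 1 T, (z ^ (-(τ : ℤ))) • Φxy τ) * C)
        = (z ^ (T+1)) • (∑ τ ∈ Icc 1 T, (z ^ (-(τ : ℤ))) • Φxx τ)
          - (((z ^ T) • (∑ τ ∈ Icc 1 T, (z ^ (-(τ : ℤ))) • Φxx τ)) * A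
            + ((z ^ T) • (∑ τ ∈ Icc 1 T, (z ^ (-(τ : ℤ))) • Φxy τ)) * C) := by
      rw [smul_sub, Matrix.mul_sub, smul_sub, Matrix.mul_smul, Matrix.mul_one, smul_smul, ← pow_succ,
        Matrix.smul_mul, Matrix.smul_mul]
      abel
    rw [← expand2, h3 z hz, sub_self]
  -- Family 4 : coefficients of z^T • h4
  have key4 : ∀ k, k < T + 1 →
      (if 1 ≤ k then Φux (T + 1 - k) else 0) - (Φux (T - k) * A + Φuy (T - k) * C) = 0 := by
    apply sls_coeffs_vanish
    intro z hz
    have e1 := sls_shift2 T Φux hux0 z hz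
    have e2 := sls_shift1 T Φux hux0 z hz
    have e3 := sls_shift3 T Φuy z hz
    have expand : ∀ k : ℕ, (z ^ k) • ((if 1 ≤ k then Φux (T + 1 - k) else 0)
        - (Φux (T - k) * A + Φuy (T - k) * C))
      = (z ^ k) • (if 1 ≤ k then Φux (T + 1 - k) else 0)
        - (((z ^ k) • Φux (T - k)) * A + ((z ^ k) • Φuy (T - k)) * C) := by
      intro k
      rw [smul_sub, smul_add, Matrix.smul_mul, Matrix.smul_mul]
    rw [sum_congr rfl fun k _ => expand k]
    rw [sum_sub_distrib, sum_add_distrib, ← Matrix.sum_mul, ← Matrix.sum_mul]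
    rw [← e1, ← e2, ← e3]
    have expand2 : (z ^ T) • ((∑ τ ∈ Icc 1 T, (z ^ (-(τ : ℤ))) • Φux τ) *
          (z • (1 : Matrix (Fin Nx) (Fin Nx) ℝ) - A) -
        (∑ τ ∈ range (T + 1), (z ^ (-(τ : ℤ))) • Φuy τ) * C)
        = (z ^ (T+1)) • (∑ τ ∈ Icc 1 T, (z ^ (-(τ : ℤ))) • Φux τ)
          - (((z ^ T) • (∑ τ ∈ Icc 1 T, (z ^ (-(τ : ℤ))) • Φux τ)) * A
            + ((z ^ T) • (∑ τ ∈ range (T + 1), (z ^ (-(τ : ℤ))) • Φuy τ)) * C) := by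
      rw [smul_sub, Matrix.mul_sub, smul_sub, Matrix.mul_smul, Matrix.mul_one, smul_smul, ← pow_succ,
        Matrix.smul_mul, Matrix.smul_mul]
      abel
    rw [← expand2, h4 z hz, smul_zero]
  -- Extraction
  have rec2 : ∀ τ, τ < T → Φxy (τ + 1) = A * Φxy τ + B * Φuy τ := by
    intro τ hτ
    have hk := key2 (T - τ) (by omega)
    have g1 : 1 ≤ T - τ := by omega
    have g2 : T + 1 - (T - τ) = τ + 1 := by omega
    have g3 : T - (T - τ) = τ := by omega
    rw [if_pos g1, g2, g3, sub_eq_zero] at hk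
    exact hk
  have rec3 : ∀ τ, 1 ≤ τ → τ < T → Φxx (τ + 1) = Φxx τ * A + Φxy τ * C := by
    intro τ h1τ hτ
    have hk := key3 (T - τ) (by omega)
    have g1 : 1 ≤ T - τ := by omega
    have g2 : T + 1 - (T - τ) = τ + 1 := by omega
    have g3 : T - (T - τ) = τ := by omega
    have g4 : T - τ ≠ T := by omega
    rw [if_pos g1, g2, g3, if_neg g4, sub_zero, sub_eq_zero] at hk
    exact hk
  have rec4 : ∀ τ, 1 ≤ τ → τ < T → Φux (τ + 1) = Φux τ * A + Φuy τ * C := by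
    intro τ h1τ hτ
    have hk := key4 (T - τ) (by omega)
    have g1 : 1 ≤ T - τ := by omega
    have g2 : T + 1 - (T - τ) = τ + 1 := by omega
    have g3 : T - (T - τ) = τ := by omega
    rw [if_pos g1, g2, g3, sub_eq_zero] at hk
    exact hk
  have rec1 : ∀ τ, 1 ≤ τ → τ < T → Φxx (τ + 1) = A * Φxx τ + B * Φux τ := by
    intro τ h1τ hτ
    have hk := key1 (T - τ) (by omega)
    have g1 : 1 ≤ T - τ := by omega
    have g2 : T + 1 - (T - τ) = τ + 1 := by omega
    have g3 : T - (T - τ) = τ := by omega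
    have g4 : T - τ ≠ T := by omega
    rw [if_pos g1, g2, g3, if_neg g4, sub_zero, sub_eq_zero] at hk
    exact hk
  -- terminal conditions (k = 0)
  have term1 : A * Φxx T + B * Φux T = 0 := by
    have hk := key1 0 (by omega)
    have g4 : (0:ℕ) ≠ T := by omega
    rw [if_neg (by omega : ¬ (1 ≤ 0)), if_neg g4, sub_zero, Nat.sub_zero, zero_sub,
      neg_eq_zero] at hk
    exact hk
  have term2 : A * Φxy T + B * Φuy T = 0 := by
    have hk := key2 0 (by omega)
    rw [if_neg (by omega : ¬ (1 ≤ 0)), Nat.sub_zero, zero_sub, neg_eq_zero] at hk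
    exact hk
  have term3 : Φxx T * A + Φxy T * C = 0 := by
    have hk := key3 0 (by omega)
    have g4 : (0:ℕ) ≠ T := by omega
    rw [if_neg (by omega : ¬ (1 ≤ 0)), if_neg g4, sub_zero, Nat.sub_zero, zero_sub,
      neg_eq_zero] at hk
    exact hk
  have term4 : Φux T * A + Φuy T * C = 0 := by
    have hk := key4 0 (by omega)
    rw [if_neg (by omega : ¬ (1 ≤ 0)), Nat.sub_zero, zero_sub, neg_eq_zero] at hk
    exact hk
  -- initial conditions (k = T)
  have init1 : Φxx 1 = 1 := by
    have hk := key1 T (by omega)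
    have gg : T + 1 - T = 1 := by omega
    rw [if_pos hT, if_pos rfl, gg, Nat.sub_self, hxx0, hux0] at hk
    simpa [sub_eq_zero] using hk
  have init2 : Φxy 1 = B * Φuy 0 := by
    have := rec2 0 (by omega)
    simpa [hxy0] using this
  have init4 : Φux 1 = Φuy 0 * C := by
    have hk := key4 T (by omega)
    have gg : T + 1 - T = 1 := by omega
    rw [if_pos hT, gg, Nat.sub_self, hux0, sub_eq_zero] at hk
    simpa using hk
  -- interior constraint
  have interior : ∀ τ, 1 ≤ τ → τ ≤ T → A * Φxx τ + B * Φux τ = Φxx τ * A + Φxy τ * C := by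
    intro τ h1τ hτT
    rcases eq_or_lt_of_le hτT with rfl | hlt
    · rw [term1, term3]
    · rw [← rec1 τ h1τ hlt, ← rec3 τ h1τ hlt]
  exact ⟨rec2, rec3, rec4, interior, ⟨init1, init2, init4⟩, term3, term2, term4⟩
end

section
/- Conversely, if matrix sequences Φxx[τ], Φxy[τ], Φux[τ] (τ = 0,…,T) and Φuy[τ] (τ = 0,…,T) satisfy all the time-domain recursions, initial conditions, interior constraints, and terminal conditions listed above, then the FIR transfer matrices built from them satisfy both SLS affine constraints [zI−A, −B]Φ = [I, 0] and Φ[zI−A; −C] = [I; 0]. -/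
open Matrix Finset

private lemma sum_Icc_telescope {M : Type*} [AddCommGroup M] (g : ℕ → M) (T : ℕ) :
    ∑ τ ∈ Icc 1 T, (g τ - g (τ + 1)) = g 1 - g (T + 1) := by
  induction T with
  | zero => simp
  | succ T ih =>
    rw [Finset.sum_Icc_succ_top (by omega), ih]
    abel

private lemma main_tele {M : Type*} [AddCommGroup M] [Module ℝ M] (z : ℝ) (hz : z ≠ 0)
    (T : ℕ) (hT : 1 ≤ T) (Φ G : ℕ → M)
    (hG : ∀ τ, 1 ≤ τ → τ < T → G τ = Φ (τ + 1)) (hGT : G T = 0) :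
    ∑ τ ∈ Icc 1 T, ((z * z ^ (-(τ : ℤ))) • Φ τ - (z ^ (-(τ : ℤ))) • G τ) = Φ 1 := by
  set F : ℕ → M := fun τ => if τ ≤ T then Φ τ else 0 with hF
  set g : ℕ → M := fun τ => (z ^ ((1 : ℤ) - τ)) • F τ with hg
  have key : ∀ τ ∈ Icc 1 T,
      (z * z ^ (-(τ : ℤ))) • Φ τ - (z ^ (-(τ : ℤ))) • G τ = g τ - g (τ + 1) := by
    intro τ hτ
    simp only [Finset.mem_Icc] at hτ
    have h1 : z * z ^ (-(τ : ℤ)) = z ^ ((1 : ℤ) - τ) := by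
      rw [sub_eq_add_neg, zpow_add₀ hz, zpow_one]
    have h2 : ((1 : ℤ) - ((τ + 1 : ℕ) : ℤ)) = -(τ : ℤ) := by push_cast; ring
    have hFτ : F τ = Φ τ := if_pos hτ.2
    have hGF : G τ = F (τ + 1) := by
      rcases eq_or_lt_of_le hτ.2 with h | h
      · subst h; simp [hF, hGT]
      · rw [hG τ hτ.1 h, hF]; simp [Nat.succ_le_of_lt h]
    simp only [hg, h2, hFτ, hGF, h1]
  rw [Finset.sum_congr rfl key, sum_Icc_telescope]
  simp [hg, hF, Nat.not_succ_le_self, hT]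

/-- Conversely: if the spectral components satisfy the time-domain recursions, initial
conditions, interior constraints, and terminal conditions, then the FIR transfer
matrices built from them satisfy both SLS affine constraints
`[zI−A, −B]Φ = [I, 0]` and `Φ[zI−A; −C] = [I; 0]` (for all `z ≠ 0`). -/
theorem time_domain_to_sls_constraints {Nx Nu Ny : ℕ} (T : ℕ) (hT : 1 ≤ T)
    (A : Matrix (Fin Nx) (Fin Nx) ℝ) (B : Matrix (Fin Nx) (Fin Nu) ℝ)
    (C : Matrix (Fin Ny) (Fin Nx) ℝ)
    (Φxx : ℕ → Matrix (Fin Nx) (Fin Nx) ℝ) (Φxy : ℕ → Matrix (Fin Nx) (Fin Ny) ℝ)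
    (Φux : ℕ → Matrix (Fin Nu) (Fin Nx) ℝ) (Φuy : ℕ → Matrix (Fin Nu) (Fin Ny) ℝ)
    (hxx0 : Φxx 0 = 0) (hxy0 : Φxy 0 = 0) (hux0 : Φux 0 = 0)
    (hrec_xy : ∀ τ, τ < T → Φxy (τ + 1) = A * Φxy τ + B * Φuy τ)
    (hrec_xx : ∀ τ, 1 ≤ τ → τ < T → Φxx (τ + 1) = Φxx τ * A + Φxy τ * C)
    (hrec_ux : ∀ τ, 1 ≤ τ → τ < T → Φux (τ + 1) = Φux τ * A + Φuy τ * C)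
    (hinterior : ∀ τ, 1 ≤ τ → τ ≤ T → A * Φxx τ + B * Φux τ = Φxx τ * A + Φxy τ * C)
    (hxx1 : Φxx 1 = 1) (hxy1 : Φxy 1 = B * Φuy 0) (hux1 : Φux 1 = Φuy 0 * C)
    (hterm_xx : Φxx T * A + Φxy T * C = 0)
    (hterm_xy : A * Φxy T + B * Φuy T = 0)
    (hterm_ux : Φux T * A + Φuy T * C = 0) :
    (∀ z : ℝ, z ≠ 0 →
      (z • (1 : Matrix (Fin Nx) (Fin Nx) ℝ) - A) *
          (∑ τ ∈ Icc 1 T, (z ^ (-(τ : ℤ))) • Φxx τ) -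
        B * (∑ τ ∈ Icc 1 T, (z ^ (-(τ : ℤ))) • Φux τ) = 1) ∧
    (∀ z : ℝ, z ≠ 0 →
      (z • (1 : Matrix (Fin Nx) (Fin Nx) ℝ) - A) *
          (∑ τ ∈ Icc 1 T, (z ^ (-(τ : ℤ))) • Φxy τ) -
        B * (∑ τ ∈ range (T + 1), (z ^ (-(τ : ℤ))) • Φuy τ) = 0) ∧
    (∀ z : ℝ, z ≠ 0 →
      (∑ τ ∈ Icc 1 T, (z ^ (-(τ : ℤ))) • Φxx τ) *
          (z • (1 : Matrix (Fin Nx) (Fin Nx) ℝ) - A) -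
        (∑ τ ∈ Icc 1 T, (z ^ (-(τ : ℤ))) • Φxy τ) * C = 1) ∧
    (∀ z : ℝ, z ≠ 0 →
      (∑ τ ∈ Icc 1 T, (z ^ (-(τ : ℤ))) • Φux τ) *
          (z • (1 : Matrix (Fin Nx) (Fin Nx) ℝ) - A) -
        (∑ τ ∈ range (T + 1), (z ^ (-(τ : ℤ))) • Φuy τ) * C = 0) := by
  have hr : range (T + 1) = insert 0 (Icc 1 T) := by
    ext x; simp only [Finset.mem_range, Finset.mem_insert, Finset.mem_Icc]; omega
  refine ⟨?_, ?_, ?_, ?_⟩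
  · intro z hz
    have hG : ∀ τ, 1 ≤ τ → τ < T → A * Φxx τ + B * Φux τ = Φxx (τ + 1) :=
      fun τ h1 h2 => (hinterior τ h1 h2.le).trans (hrec_xx τ h1 h2).symm
    have hGT : A * Φxx T + B * Φux T = 0 := (hinterior T hT le_rfl).trans hterm_xx
    have h := main_tele z hz T hT Φxx (fun τ => A * Φxx τ + B * Φux τ) hG hGT
    have h' : ∑ τ ∈ Icc 1 T,
        ((z * z ^ (-(τ : ℤ))) • Φxx τ - (z ^ (-(τ : ℤ))) • (A * Φxx τ + B * Φux τ)) = Φxx 1 := h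
    trans (∑ τ ∈ Icc 1 T,
        ((z * z ^ (-(τ : ℤ))) • Φxx τ - (z ^ (-(τ : ℤ))) • (A * Φxx τ + B * Φux τ)))
    · simp only [Matrix.sub_mul, Matrix.smul_mul, Matrix.one_mul, Finset.smul_sum,
        Matrix.mul_sum, Matrix.mul_smul, smul_smul, smul_add, smul_sub, mul_comm, Finset.sum_sub_distrib,
        Finset.sum_add_distrib]
      abel
    · rw [h', hxx1]
  · intro z hz
    have hG : ∀ τ, 1 ≤ τ → τ < T → A * Φxy τ + B * Φuy τ = Φxy (τ + 1) :=
      fun τ _ h2 => (hrec_xy τ h2).symm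
    have h := main_tele z hz T hT Φxy (fun τ => A * Φxy τ + B * Φuy τ) hG hterm_xy
    have h' : ∑ τ ∈ Icc 1 T,
        ((z * z ^ (-(τ : ℤ))) • Φxy τ - (z ^ (-(τ : ℤ))) • (A * Φxy τ + B * Φuy τ)) = Φxy 1 := h
    trans ((∑ τ ∈ Icc 1 T,
        ((z * z ^ (-(τ : ℤ))) • Φxy τ - (z ^ (-(τ : ℤ))) • (A * Φxy τ + B * Φuy τ))) - B * Φuy 0)
    · rw [hr, Finset.sum_insert (by simp)]
      simp only [Matrix.sub_mul, Matrix.smul_mul, Matrix.one_mul, Finset.smul_sum,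
        Matrix.mul_add, Matrix.mul_sum, Matrix.mul_smul, smul_smul, smul_add, smul_sub, mul_comm,
        Nat.cast_zero, neg_zero, zpow_zero, one_smul, Finset.sum_sub_distrib,
        Finset.sum_add_distrib]
      abel
    · rw [h', hxy1, sub_self]
  · intro z hz
    have hG : ∀ τ, 1 ≤ τ → τ < T → Φxx τ * A + Φxy τ * C = Φxx (τ + 1) :=
      fun τ h1 h2 => (hrec_xx τ h1 h2).symm
    have h := main_tele z hz T hT Φxx (fun τ => Φxx τ * A + Φxy τ * C) hG hterm_xx
    have h' : ∑ τ ∈ Icc 1 T,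
        ((z * z ^ (-(τ : ℤ))) • Φxx τ - (z ^ (-(τ : ℤ))) • (Φxx τ * A + Φxy τ * C)) = Φxx 1 := h
    trans (∑ τ ∈ Icc 1 T,
        ((z * z ^ (-(τ : ℤ))) • Φxx τ - (z ^ (-(τ : ℤ))) • (Φxx τ * A + Φxy τ * C)))
    · simp only [Matrix.mul_sub, Matrix.mul_smul, Matrix.mul_one, Finset.smul_sum,
        Matrix.sum_mul, Matrix.smul_mul, smul_smul, smul_add, smul_sub, mul_comm, Finset.sum_sub_distrib,
        Finset.sum_add_distrib]
      abel
    · rw [h', hxx1]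
  · intro z hz
    have hG : ∀ τ, 1 ≤ τ → τ < T → Φux τ * A + Φuy τ * C = Φux (τ + 1) :=
      fun τ h1 h2 => (hrec_ux τ h1 h2).symm
    have h := main_tele z hz T hT Φux (fun τ => Φux τ * A + Φuy τ * C) hG hterm_ux
    have h' : ∑ τ ∈ Icc 1 T,
        ((z * z ^ (-(τ : ℤ))) • Φux τ - (z ^ (-(τ : ℤ))) • (Φux τ * A + Φuy τ * C)) = Φux 1 := h
    trans ((∑ τ ∈ Icc 1 T,
        ((z * z ^ (-(τ : ℤ))) • Φux τ - (z ^ (-(τ : ℤ))) • (Φux τ * A + Φuy τ * C))) - Φuy 0 * C)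
    · rw [hr, Finset.sum_insert (by simp)]
      simp only [Matrix.mul_sub, Matrix.mul_smul, Matrix.mul_one, Finset.smul_sum,
        Matrix.add_mul, Matrix.sum_mul, Matrix.smul_mul, smul_smul, smul_add, smul_sub, mul_comm,
        Nat.cast_zero, neg_zero, zpow_zero, one_smul, Finset.sum_sub_distrib,
        Finset.sum_add_distrib]
      abel
    · rw [h', hux1, sub_self]
end

section
/- The matrix equation P(ÃX + B̃U) = 0 in unknowns (X, U) (with X ∈ ℝⁿ, U ∈ ℝᵐ, P p×n) has solution set exactly {(x, H_x x + H_λ λ) : (ΓB H_x + ΓA)x = 0, λ ∈ ℝᵏ}, where ΓA = PÃ, ΓB = PB̃, H_x is any minimizer of ‖ΓB M + ΓA‖_F over matrices M, and the columns of H_λ form a basis of nul(ΓB). -/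
open Matrix

/-- Frobenius norm of a real matrix. -/
noncomputable def frobNorm {m n : ℕ} (A : Matrix (Fin m) (Fin n) ℝ) : ℝ :=
  Real.sqrt (∑ i, ∑ j, (A i j) ^ 2)

private lemma quad_zero (b c : ℝ) (hc : 0 ≤ c) (h : ∀ t : ℝ, 0 ≤ b * t + c * t ^ 2) :
    b = 0 := by
  have hc1 : (0:ℝ) < c + 1 := by linarith
  have h1 := h (-b / (c + 1))
  rw [div_pow, ← mul_div_assoc, ← mul_div_assoc, div_add_div _ _ (ne_of_gt hc1) (by positivity),
    le_div_iff₀ (by positivity)] at h1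
  nlinarith [sq_nonneg b]

private lemma mul_std_entry {m n p : ℕ} (ΓB : Matrix (Fin p) (Fin m) ℝ) (q : Fin m) (r : Fin n)
    (i : Fin p) (j : Fin n) :
    (ΓB * Matrix.single q r (1:ℝ)) i j = if j = r then ΓB i q else 0 := by
  simp only [Matrix.mul_apply, Matrix.single, ite_and, mul_ite, mul_one, mul_zero]
  rcases eq_or_ne j r with h | h
  · simp [h]
  · simp [h, Ne.symm h]

/-- Normal equations for the Frobenius-norm minimizer: `ΓBᵀ (ΓB Hx + ΓA) = 0`. -/
private lemma normal_eq {m n p : ℕ} (ΓA : Matrix (Fin p) (Fin n) ℝ)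
    (ΓB : Matrix (Fin p) (Fin m) ℝ) (Hx : Matrix (Fin m) (Fin n) ℝ)
    (hHx : ∀ M : Matrix (Fin m) (Fin n) ℝ,
      frobNorm (ΓB * Hx + ΓA) ≤ frobNorm (ΓB * M + ΓA)) :
    ∀ q r, ∑ i, ΓB i q * (ΓB * Hx + ΓA) i r = 0 := by
  set R := ΓB * Hx + ΓA with hR
  have hsq : ∀ M : Matrix (Fin m) (Fin n) ℝ,
      (∑ i, ∑ j, (R i j) ^ 2) ≤ ∑ i, ∑ j, ((ΓB * M + ΓA) i j) ^ 2 := by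
    intro M
    have h1 := hHx M
    have h2 : (0:ℝ) ≤ ∑ i, ∑ j, (R i j) ^ 2 := by positivity
    have h3 : (0:ℝ) ≤ ∑ i, ∑ j, ((ΓB * M + ΓA) i j) ^ 2 := by positivity
    unfold frobNorm at h1
    nlinarith [Real.sq_sqrt h2, Real.sq_sqrt h3, Real.sqrt_nonneg (∑ i, ∑ j, (R i j) ^ 2),
      Real.sqrt_nonneg (∑ i, ∑ j, ((ΓB * M + ΓA) i j) ^ 2)]
  intro q r
  set N : Matrix (Fin m) (Fin n) ℝ := Matrix.single q r (1:ℝ) with hN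
  set b : ℝ := ∑ i, ∑ j, R i j * (ΓB * N) i j with hb
  set c : ℝ := ∑ i, ∑ j, ((ΓB * N) i j) ^ 2 with hc
  have hexp : ∀ t : ℝ, (∑ i, ∑ j, ((ΓB * (Hx + t • N) + ΓA) i j) ^ 2)
      = (∑ i, ∑ j, (R i j) ^ 2) + (2 * b) * t + c * t ^ 2 := by
    intro t
    have hentry : ∀ (i : Fin p) (j : Fin n),
        (ΓB * (Hx + t • N) + ΓA) i j = R i j + t * (ΓB * N) i j := by
      intro i j
      simp [Matrix.mul_add, Matrix.mul_smul, Matrix.add_apply, Matrix.smul_apply, hR]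
      ring
    calc ∑ i, ∑ j, ((ΓB * (Hx + t • N) + ΓA) i j) ^ 2
        = ∑ i, ∑ j, ((R i j) ^ 2 + (R i j * (ΓB * N) i j) * (2 * t)
            + ((ΓB * N) i j ^ 2) * t ^ 2) := by
          simp only [hentry]
          exact Finset.sum_congr rfl fun i _ => Finset.sum_congr rfl fun j _ => by ring
      _ = (∑ i, ∑ j, (R i j) ^ 2) + (∑ i, ∑ j, R i j * (ΓB * N) i j) * (2 * t)
            + (∑ i, ∑ j, ((ΓB * N) i j) ^ 2) * t ^ 2 := by
          simp only [Finset.sum_add_distrib, ← Finset.sum_mul]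
      _ = (∑ i, ∑ j, (R i j) ^ 2) + (2 * b) * t + c * t ^ 2 := by
          rw [hb, hc]
          ring
  have hcnn : 0 ≤ c := by positivity
  have hquad : ∀ t : ℝ, 0 ≤ (2 * b) * t + c * t ^ 2 := by
    intro t
    have := hsq (Hx + t • N)
    rw [hexp t] at this
    linarith
  have hb0 : b = 0 := by
    have := quad_zero (2 * b) c hcnn hquad
    linarith
  have hbval : b = ∑ i, R i r * ΓB i q := by
    rw [hb]
    apply Finset.sum_congr rfl
    intro i _
    simp only [hN, mul_std_entry, mul_ite, mul_zero, Finset.sum_ite_eq', Finset.mem_univ,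
      if_true]
  rw [hbval] at hb0
  rw [← hb0]
  apply Finset.sum_congr rfl
  intro i _
  ring

/-- The solution set of `P(ÃX + B̃U) = 0` is exactly
`{(x, H_x x + H_λ λ) : (ΓB H_x + ΓA)x = 0, λ}`, where `ΓA = PÃ`, `ΓB = PB̃`, `H_x`
is any minimizer of `‖ΓB M + ΓA‖_F`, and the columns of `H_λ` form a basis of
`nul(ΓB)`. -/
theorem sls_solution_set_characterization {n m p k : ℕ}
    (Atil : Matrix (Fin n) (Fin n) ℝ) (Btil : Matrix (Fin n) (Fin m) ℝ)
    (P : Matrix (Fin p) (Fin n) ℝ)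
    (ΓA : Matrix (Fin p) (Fin n) ℝ) (ΓB : Matrix (Fin p) (Fin m) ℝ)
    (hΓA : ΓA = P * Atil) (hΓB : ΓB = P * Btil)
    (Hx : Matrix (Fin m) (Fin n) ℝ)
    (hHx : ∀ M : Matrix (Fin m) (Fin n) ℝ,
      frobNorm (ΓB * Hx + ΓA) ≤ frobNorm (ΓB * M + ΓA))
    (Hl : Matrix (Fin m) (Fin k) ℝ)
    (hHl_indep : LinearIndependent ℝ (fun j : Fin k => fun i : Fin m => Hl i j))
    (hHl_span : Submodule.span ℝ
        (Set.range (fun j : Fin k => fun i : Fin m => Hl i j)) =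
      LinearMap.ker ΓB.mulVecLin) :
    {xu : (Fin n → ℝ) × (Fin m → ℝ) |
        P.mulVec (Atil.mulVec xu.1 + Btil.mulVec xu.2) = 0} =
      {xu : (Fin n → ℝ) × (Fin m → ℝ) |
        (ΓB * Hx + ΓA).mulVec xu.1 = 0 ∧
        ∃ lam : Fin k → ℝ, xu.2 = Hx.mulVec xu.1 + Hl.mulVec lam} := by
  have hkey := normal_eq ΓA ΓB Hx hHx
  set R := ΓB * Hx + ΓA with hR
  -- rewrite the defining equation
  have hPA : ∀ (x : Fin n → ℝ) (u : Fin m → ℝ),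
      P.mulVec (Atil.mulVec x + Btil.mulVec u) = ΓA.mulVec x + ΓB.mulVec u := by
    intro x u
    rw [Matrix.mulVec_add, hΓA, hΓB, ← Matrix.mulVec_mulVec, ← Matrix.mulVec_mulVec]
  have hRx : ∀ x : Fin n → ℝ, R.mulVec x = ΓB.mulVec (Hx.mulVec x) + ΓA.mulVec x := by
    intro x
    rw [hR, Matrix.add_mulVec, Matrix.mulVec_mulVec]
  -- Hl.mulVec as a linear combination of columns
  have hHlcomb : ∀ lam : Fin k → ℝ,
      Hl.mulVec lam = ∑ j, lam j • (fun i : Fin m => Hl i j) := by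
    intro lam
    funext i
    simp [Matrix.mulVec, dotProduct, Finset.sum_apply, mul_comm]
  -- columns of Hl are in the kernel, hence ΓB (Hl λ) = 0
  have hHlker : ∀ lam : Fin k → ℝ, ΓB.mulVec (Hl.mulVec lam) = 0 := by
    intro lam
    have hmem : Hl.mulVec lam ∈ Submodule.span ℝ
        (Set.range (fun j : Fin k => fun i : Fin m => Hl i j)) := by
      rw [Submodule.mem_span_range_iff_exists_fun]
      exact ⟨lam, (hHlcomb lam).symm⟩
    rw [hHl_span] at hmem
    simpa using hmem
  ext ⟨x, u⟩
  simp only [Set.mem_setOf_eq]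
  constructor
  · intro h
    rw [hPA x u] at h
    -- R x ∈ range ΓB
    have hrange : R.mulVec x = ΓB.mulVec (Hx.mulVec x - u) := by
      rw [Matrix.mulVec_sub, hRx]
      have : ΓA.mulVec x = -(ΓB.mulVec u) := by
        rw [eq_neg_iff_add_eq_zero]
        exact h
      rw [this]
      abel
    -- but also R x ⟂ range ΓB, via the normal equations
    have horth : ∀ qq : Fin m, ∑ i, ΓB i qq * R.mulVec x i = 0 := by
      intro qq
      have : ∑ i, ΓB i qq * R.mulVec x i
          = ∑ r', (∑ i, ΓB i qq * R i r') * x r' := by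
        simp only [Matrix.mulVec, dotProduct, Finset.mul_sum]
        rw [Finset.sum_comm]
        apply Finset.sum_congr rfl
        intro r' _
        rw [Finset.sum_mul]
        apply Finset.sum_congr rfl
        intro i _
        ring
      rw [this]
      simp [hkey]
    have hRx0 : R.mulVec x = 0 := by
      have hss : ∑ i, (R.mulVec x i) ^ 2 = 0 := by
        have : ∑ i, (R.mulVec x i) ^ 2
            = ∑ i, R.mulVec x i * ΓB.mulVec (Hx.mulVec x - u) i := by
          apply Finset.sum_congr rfl
          intro i _
          rw [← hrange]
          ring
        rw [this]
        have : ∑ i, R.mulVec x i * ΓB.mulVec (Hx.mulVec x - u) i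
            = ∑ qq, (Hx.mulVec x - u) qq * ∑ i, ΓB i qq * R.mulVec x i := by
          simp only [Matrix.mulVec, dotProduct, Finset.mul_sum]
          rw [Finset.sum_comm]
          apply Finset.sum_congr rfl
          intro qq _
          simp only [Finset.sum_mul]
          apply Finset.sum_congr rfl
          intro i _
          exact Finset.sum_congr rfl fun j _ => by ring
        rw [this]
        simp [horth]
      funext i
      have := (Finset.sum_eq_zero_iff_of_nonneg
        (fun i _ => sq_nonneg (R.mulVec x i))).mp hss i (Finset.mem_univ i)
      have := pow_eq_zero_iff (n := 2) (by norm_num) |>.mp this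
      simpa using this
    refine ⟨hRx0, ?_⟩
    -- u - Hx x lies in the kernel of ΓB
    have hker : ΓB.mulVec (u - Hx.mulVec x) = 0 := by
      rw [Matrix.mulVec_sub]
      have h2 : ΓB.mulVec (Hx.mulVec x - u) = 0 := by rw [← hrange, hRx0]
      rw [Matrix.mulVec_sub] at h2
      have := sub_eq_zero.mp h2
      rw [this, sub_self]
    have hmem : u - Hx.mulVec x ∈ LinearMap.ker ΓB.mulVecLin := by
      simpa using hker
    rw [← hHl_span] at hmem
    rw [Submodule.mem_span_range_iff_exists_fun] at hmem
    obtain ⟨lam, hlam⟩ := hmem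
    refine ⟨lam, ?_⟩
    rw [hHlcomb lam, hlam]
    abel
  · rintro ⟨h1, lam, h2⟩
    rw [hPA x u, h2, Matrix.mulVec_add, hHlker lam, add_zero, add_comm, ← hRx x]
    exact h1
end
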